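/- Let V be a finite-dimensional real inner product space and let Δ ⊆ V be a finite linearly independent set of vectors such that ⟨α, β⟩ ≤ 0 for all distinct α, β ∈ Δ. Let I ⊆ Δ be any subset and let α ∈ Δ ∖ I. Then there exist unique real numbers n_β ≥ 0, one for each β ∈ I, such that the vector χ_α = α + Σ_{β∈I} n_β·β is orthogonal to every element of I. -/

import Mathlib

open scoped RealInnerProductSpace

/-!
Existence: take `χ = α + ∑ n β • β` to be `α - p α`, where `p` is the orthogonal projection onto `span I`.
Uniqueness: the difference of two solutions lies in `span I` and is orthogonal to `I`, hence is `0`.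
Non-negativity: split `n = max n 0 + min n 0` and put `v = ∑ min (n β) 0 • β`. Then
`0 = ⟪χ, v⟫ = ⟪α, v⟫ + ⟪∑ max (n β) 0 • β, v⟫ + ⟪v, v⟫`, and the first two terms are `≥ 0`
because the angles between distinct simple roots are obtuse; so `v = 0`, and linear independence
forces `min (n β) 0 = 0`.
-/

open Finset

section

variable {V : Type*} [NormedAddCommGroup V] [InnerProductSpace ℝ V]

lemma sum_smul_eq_zero_of_inner_eq_zero {s : Finset V} {c : V → ℝ}
    (h : ∀ γ ∈ s, ⟪∑ β ∈ s, c β • β, γ⟫ = 0) : ∑ β ∈ s, c β • β = 0 := by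
  refine inner_self_eq_zero (𝕜 := ℝ) |>.mp ?_
  rw [inner_sum]
  exact sum_eq_zero fun γ hγ => by rw [real_inner_smul_right, h γ hγ, mul_zero]

lemma inner_sum_smul_nonneg_of_pairwise_inner_nonpos {s : Finset V}
    (hs : (s : Set V).Pairwise fun β γ => ⟪β, γ⟫ ≤ 0) {a b : V → ℝ}
    (ha : ∀ β ∈ s, 0 ≤ a β) (hb : ∀ β ∈ s, b β ≤ 0) (hab : ∀ β ∈ s, a β * b β = 0) :
    0 ≤ ⟪∑ β ∈ s, a β • β, ∑ γ ∈ s, b γ • γ⟫ := by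
  rw [sum_inner]
  refine sum_nonneg fun β hβ => ?_
  rw [inner_sum]
  refine sum_nonneg fun γ hγ => ?_
  rw [real_inner_smul_left, real_inner_smul_right]
  obtain rfl | hne := eq_or_ne β γ
  · rw [← mul_assoc, hab β hβ, zero_mul]
  · exact mul_nonneg (ha β hβ) (mul_nonneg_of_nonpos_of_nonpos (hb γ hγ) (hs hβ hγ hne))

lemma exists_inner_add_sum_smul_eq_zero (s : Finset V) (α : V) :
    ∃ n : V → ℝ, (∀ β ∉ s, n β = 0) ∧ ∀ γ ∈ s, ⟪α + ∑ β ∈ s, n β • β, γ⟫ = 0 := by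
  set K := Submodule.span ℝ (s : Set V)
  obtain ⟨f, hfs, hf⟩ := Submodule.mem_span_finset.mp (K.starProjection_apply_mem α)
  refine ⟨-f, fun β hβ => by simp [Function.support_subset_iff'.mp hfs β hβ], fun γ hγ => ?_⟩
  have hχ : α + ∑ β ∈ s, (-f) β • β = α - K.starProjection α := by
    simp only [Pi.neg_apply, neg_smul, sum_neg_distrib, hf, sub_eq_add_neg]
  rw [hχ, real_inner_comm]
  exact Submodule.inner_right_of_mem_orthogonal (Submodule.subset_span hγ)
    (K.sub_starProjection_mem_orthogonal α)

variable {s : Finset V} (hli : LinearIndepOn ℝ id (s : Set V)) {α : V}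
include hli

lemma eqOn_of_inner_add_sum_smul_eq_zero {m n : V → ℝ}
    (hm : ∀ γ ∈ s, ⟪α + ∑ β ∈ s, m β • β, γ⟫ = 0) (hn : ∀ γ ∈ s, ⟪α + ∑ β ∈ s, n β • β, γ⟫ = 0) :
    ∀ β ∈ s, m β = n β := by
  have hdiff : ∑ β ∈ s, (m β - n β) • β = (α + ∑ β ∈ s, m β • β) - (α + ∑ β ∈ s, n β • β) := by
    simp only [sub_smul, sum_sub_distrib]
    abel
  have hzero : ∑ β ∈ s, (m β - n β) • β = 0 := sum_smul_eq_zero_of_inner_eq_zero fun γ hγ => by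
    rw [hdiff, inner_sub_left, hm γ hγ, hn γ hγ, sub_zero]
  exact fun β hβ => sub_eq_zero.mp (linearIndepOn_iff'.mp hli s _ subset_rfl hzero β hβ)

lemma nonneg_of_inner_add_sum_smul_eq_zero
    (hs : (s : Set V).Pairwise fun β γ => ⟪β, γ⟫ ≤ 0) (hα : ∀ β ∈ s, ⟪α, β⟫ ≤ 0) {n : V → ℝ}
    (h : ∀ γ ∈ s, ⟪α + ∑ β ∈ s, n β • β, γ⟫ = 0) : ∀ β ∈ s, 0 ≤ n β := by
  set w := ∑ β ∈ s, max (n β) 0 • β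
  set v := ∑ β ∈ s, min (n β) 0 • β
  have hsplit : ∑ β ∈ s, n β • β = w + v := by
    rw [← sum_add_distrib]
    exact sum_congr rfl fun β _ => by rw [← add_smul, max_add_min, add_zero]
  have hχv : ⟪α + w + v, v⟫ = 0 := by
    rw [add_assoc, ← hsplit, inner_sum]
    exact sum_eq_zero fun γ hγ => by rw [real_inner_smul_right, h γ hγ, mul_zero]
  have hαv : 0 ≤ ⟪α, v⟫ := by
    rw [inner_sum]
    exact sum_nonneg fun β hβ => by
      rw [real_inner_smul_right]
      exact mul_nonneg_of_nonpos_of_nonpos (min_le_right _ _) (hα β hβ)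
  have hwv : 0 ≤ ⟪w, v⟫ :=
    inner_sum_smul_nonneg_of_pairwise_inner_nonpos hs (fun β _ => le_max_right _ _)
      (fun β _ => min_le_right _ _)
      (fun β _ => by rcases le_total (n β) 0 with hβ | hβ <;> simp [hβ])
  have hv : v = 0 := by
    refine inner_self_eq_zero.mp (le_antisymm ?_ real_inner_self_nonneg)
    rw [inner_add_left, inner_add_left] at hχv
    linarith
  exact fun β hβ => min_eq_right_iff.mp (linearIndepOn_iff'.mp hli s _ subset_rfl hv β hβ)

end

theorem property_R_of_root_systems_general
    (V : Type*) [NormedAddCommGroup V] [InnerProductSpace ℝ V]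
    (Δ : Finset V)
    (hind : LinearIndependent ℝ (fun (v : (Δ : Set V)) => (v : V)))
    (hobtuse : ∀ α ∈ Δ, ∀ β ∈ Δ, α ≠ β → ⟪α, β⟫ ≤ 0)
    (I : Finset V) (hI : I ⊆ Δ) (α : V) (hαΔ : α ∈ Δ) (hαI : α ∉ I) :
    ∃! n : V → ℝ,
      (∀ β ∈ I, 0 ≤ n β) ∧ (∀ β ∉ I, n β = 0) ∧
        ∀ γ ∈ I, ⟪α + ∑ β ∈ I, n β • β, γ⟫ = 0 := by
  have hli : LinearIndepOn ℝ id (I : Set V) := LinearIndepOn.mono hind (coe_subset.mpr hI)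
  have hαI' : ∀ β ∈ I, ⟪α, β⟫ ≤ 0 := fun β hβ =>
    hobtuse α hαΔ β (hI hβ) fun h => hαI (h ▸ hβ)
  obtain ⟨n, hn0, horth⟩ := exists_inner_add_sum_smul_eq_zero I α
  refine ⟨n, ⟨nonneg_of_inner_add_sum_smul_eq_zero hli
    (fun β hβ γ hγ => hobtuse β (hI hβ) γ (hI hγ)) hαI' horth, hn0, horth⟩, ?_⟩
  rintro m ⟨-, hm0, hmorth⟩
  funext β
  by_cases hβ : β ∈ I
  · exact eqOn_of_inner_add_sum_smul_eq_zero hli hmorth horth β hβ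
  · rw [hm0 β hβ, hn0 β hβ]

/-- Property (R) of root systems: given a finite linearly independent set `Δ` of vectors in a
real inner product space with pairwise non-positive inner products, a subset `I ⊆ Δ` and
`α ∈ Δ \ I`, there are unique non-negative reals `n β` (for `β ∈ I`) such that
`χ_α = α + ∑_{β ∈ I} n β • β` is orthogonal to every element of `I`. -/
theorem property_R_of_root_systems
    (V : Type*) [NormedAddCommGroup V] [InnerProductSpace ℝ V] [FiniteDimensional ℝ V]
    (Δ : Finset V)
    (hind : LinearIndependent ℝ (fun (v : (Δ : Set V)) => (v : V)))
    (hobtuse : ∀ α ∈ Δ, ∀ β ∈ Δ, α ≠ β → ⟪α, β⟫ ≤ 0)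
    (I : Finset V) (hI : I ⊆ Δ) (α : V) (hαΔ : α ∈ Δ) (hαI : α ∉ I) :
    ∃! n : V → ℝ,
      (∀ β ∈ I, 0 ≤ n β) ∧ (∀ β ∉ I, n β = 0) ∧
        ∀ γ ∈ I, ⟪α + ∑ β ∈ I, n β • β, γ⟫ = 0 :=
  property_R_of_root_systems_general V Δ hind hobtuse I hI α hαΔ hαI
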